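/- arXiv:0802.2755 — 5 statements merged into one kernel-verified Lean document; each statement's English description precedes it below -/
import Mathlib

section
/- Let D=(V,A) be a directed graph with S ⊆ V and f: S → ℤ≥0 such that D is (S,f)-proper, and let D* be obtained from D by adding a vertex s* and f(s_i) parallel arcs from each s_i to s*. Then every D*-rooted connector B satisfies |B| ≥ ∑_{v ∈ V} f(R_D(v)) − (|A| + f(S)). -/
open Finset

attribute [local instance] Classical.propDecidable

universe u v

/-- One step from `u` to `w` along an arc belonging to `P`. -/
def ArcStep {V E : Type} (tl hd : E → V) (P : Set E) (u w : V) : Prop :=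
  ∃ e ∈ P, tl e = u ∧ hd e = w

/-- Directed reachability from `u` to `w` using only arcs in `P`. -/
def ArcReach {V E : Type} (tl hd : E → V) (P : Set E) (u w : V) : Prop :=
  Relation.ReflTransGen (ArcStep tl hd P) u w

/-- Connectivity in the underlying undirected graph, using only arcs in `P`. -/
def UConn {V E : Type} (tl hd : E → V) (P : Set E) (u w : V) : Prop :=
  Relation.ReflTransGen (fun a b => ArcStep tl hd P a b ∨ ArcStep tl hd P b a) u w

/-- `R_D(v)`: the set of specified vertices (in `S`) reachable from `v`. -/
noncomputable def RD {V E : Type} (tl hd : E → V) (S : Finset V) (v : V) : Finset V :=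
  S.filter (fun s => ArcReach tl hd Set.univ v s)

/-- `f(R_D(v))`. -/
noncomputable def fR {V E : Type} (tl hd : E → V) (S : Finset V) (f : V → ℕ) (v : V) : ℕ :=
  ∑ s ∈ RD tl hd S v, f s

/-- `T` is an in-tree rooted at `root` spanning the vertex set `span`:
every non-root vertex of `span` has a unique outgoing arc in `T`, the root has none,
all arcs stay inside `span`, and every vertex of `span` reaches the root within `T`. -/
structure IsInTree {V E : Type} (tl hd : E → V) (root : V) (span : Set V)
    (T : Finset E) : Prop where
  mem_tail : ∀ e ∈ T, tl e ∈ span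
  mem_head : ∀ e ∈ T, hd e ∈ span
  root_mem : root ∈ span
  out_unique : ∀ v ∈ span, v ≠ root → ∃! e, e ∈ T ∧ tl e = v
  root_no_out : ∀ e ∈ T, tl e ≠ root
  reaches_root : ∀ v ∈ span, ArcReach tl hd (↑T : Set E) v root

/-- Index type for a `D`-canonical family: for each `s ∈ S` there are `f s` indices. -/
def TreeIdx {V : Type} (S : Finset V) (f : V → ℕ) : Type :=
  Σ s : {x : V // x ∈ S}, Fin (f s.1)

noncomputable instance {V : Type} (S : Finset V) (f : V → ℕ) : Fintype (TreeIdx S f) := by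
  unfold TreeIdx; infer_instance

/-- The family `T` is a `D`-canonical set of in-trees: for each `s ∈ S` and each
`j < f s`, the corresponding member is an in-tree rooted at `s` spanning the set of
vertices from which `s` is reachable. -/
def IsCanonical {V E : Type} (tl hd : E → V) (S : Finset V) (f : V → ℕ)
    (T : TreeIdx S f → Finset E) : Prop :=
  ∀ i : TreeIdx S f,
    IsInTree tl hd i.1.1 {v | ArcReach tl hd Set.univ v i.1.1} (T i)

/-- The family covers all arcs. -/
def CoversAll {V E : Type} {S : Finset V} {f : V → ℕ}
    (T : TreeIdx S f → Finset E) : Prop :=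
  ∀ e : E, ∃ i, e ∈ T i

/-- The members of the family are pairwise arc-disjoint. -/
def ArcDisjointFam {V E : Type} {S : Finset V} {f : V → ℕ}
    (T : TreeIdx S f → Finset E) : Prop :=
  ∀ i j, i ≠ j → Disjoint (T i) (T j)

/-- Tail map of `D*`: vertices are `Option V` (`none` is the apex `s*`); arcs are the
arcs of `D` together with, for each `s ∈ S`, `f s` parallel arcs from `s` to `s*`. -/
def starTail {V E : Type} (tl : E → V) (S : Finset V) (f : V → ℕ) :
    E ⊕ TreeIdx S f → Option V :=
  Sum.elim (fun e => some (tl e)) (fun p => some p.1.1)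

/-- Head map of `D*`. -/
def starHead {V E : Type} (hd : E → V) (S : Finset V) (f : V → ℕ) :
    E ⊕ TreeIdx S f → Option V :=
  Sum.elim (fun e => some (hd e)) (fun _ => none)

/-- `λ(u,w) ≥ k`: every cut separating `u` from `w` contains at least `k` arcs. -/
def LambdaGe {V' E' : Type} (tl hd : E' → V') (u w : V') (k : ℕ) : Prop :=
  ∀ W : Set V', u ∈ W → w ∉ W → k ≤ Nat.card {e : E' // tl e ∈ W ∧ hd e ∉ W}

/-- `D` is `(S,f)`-proper: `|δ_{D*}(v)| ≤ f(R_D(v))` for all `v ∈ V`. -/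
def IsProper {V E : Type} (tl hd : E → V) (S : Finset V) (f : V → ℕ) : Prop :=
  ∀ v : V,
    Nat.card {e : E ⊕ TreeIdx S f // starTail tl S f e = some v} ≤ fR tl hd S f v

/-- `B` (given by `tB, hB`) is a `D*`-rooted connector:
`λ(v, s*; D* + B) ≥ f(R_D(v))` for every vertex `v`. -/
def IsRootedConnector {V E B : Type} (tl hd : E → V) (S : Finset V) (f : V → ℕ)
    (tB hB : B → V) : Prop :=
  ∀ v : V,
    LambdaGe (starTail (Sum.elim tl tB) S f) (starHead (Sum.elim hd hB) S f)
      (some v) none (fR tl hd S f v)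

/-- Arcs of `B` are parallel to arcs of `A`. -/
def ParallelTo {V E B : Type} (tl hd : E → V) (tB hB : B → V) : Prop :=
  ∀ b : B, ∃ e : E, tl e = tB b ∧ hd e = hB b

theorem LambdaGe.le_card_tail {V' E' : Type} [Finite E'] {tl hd : E' → V'} {u w : V'} {k : ℕ}
    (h : LambdaGe tl hd u w k) (huw : u ≠ w) : k ≤ Nat.card {e // tl e = u} :=
  (h {u} rfl (Ne.symm huw)).trans <|
    Nat.card_le_card_of_injective (fun e => ⟨e.1, e.2.1⟩) fun _ _ he =>
      Subtype.ext (congrArg Subtype.val he :)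

theorem card_treeIdx {V : Type} (S : Finset V) (f : V → ℕ) :
    Nat.card (TreeIdx S f) = ∑ s ∈ S, f s := by
  rw [TreeIdx, Nat.card_sigma]
  simpa using Finset.sum_attach S f

theorem sum_card_starTail_fiber {V E : Type} [Fintype V] [Finite E] (tl : E → V)
    (S : Finset V) (f : V → ℕ) :
    ∑ v : V, Nat.card {e : E ⊕ TreeIdx S f // starTail tl S f e = some v} =
      Nat.card E + ∑ s ∈ S, f s := by
  have hfib : ∀ v, {e : E ⊕ TreeIdx S f // starTail tl S f e = some v} =
      {e // Sum.elim tl (fun p : TreeIdx S f => p.1.1) e = v} := by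
    intro v
    congr! 2 with e
    cases e <;> simp [starTail]
  simp only [hfib]
  rw [← Nat.card_sigma, Nat.card_congr (Equiv.sigmaFiberEquiv _), Nat.card_sum, card_treeIdx]

theorem stmt3_general {V A B : Type} [Fintype V] [Fintype A] [Fintype B]
    (tl hd : A → V) (tB hB : B → V) (S : Finset V) (f : V → ℕ)
    (hconn : IsRootedConnector tl hd S f tB hB) :
    (∑ v : V, (fR tl hd S f v : ℤ)) - ((Fintype.card A : ℤ) + ∑ s ∈ S, (f s : ℤ)) ≤
      (Nat.card B : ℤ) := by
  -- The cut `{v}` of `D* + B` is crossed only by arcs leaving `v`,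
  -- and the out-degrees add up to `|A ⊕ B| + f(S)`.
  have hsum : ∑ v : V, fR tl hd S f v ≤ Nat.card (A ⊕ B) + ∑ s ∈ S, f s :=
    calc ∑ v : V, fR tl hd S f v
        ≤ ∑ v : V, Nat.card {e // starTail (Sum.elim tl tB) S f e = some v} :=
          Finset.sum_le_sum fun v _ => (hconn v).le_card_tail (Option.some_ne_none v)
      _ = Nat.card (A ⊕ B) + ∑ s ∈ S, f s := sum_card_starTail_fiber _ S f
  rw [Nat.card_sum, Nat.card_eq_fintype_card (α := A)] at hsum
  zify at hsum
  omega

/-- for an `(S,f)`-proper `D`, every `D*`-rooted connector `B` satisfies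
`|B| ≥ ∑_{v ∈ V} f(R_D(v)) − (|A| + f(S))`. -/
theorem stmt3 {V A B : Type} [Fintype V] [Fintype A] [Fintype B]
    (tl hd : A → V) (tB hB : B → V) (S : Finset V) (f : V → ℕ)
    (hproper : IsProper tl hd S f)
    (hpar : ParallelTo tl hd tB hB)
    (hconn : IsRootedConnector tl hd S f tB hB) :
    (∑ v : V, (fR tl hd S f v : ℤ)) - ((Fintype.card A : ℤ) + ∑ s ∈ S, (f s : ℤ)) ≤
      (Nat.card B : ℤ) :=
  stmt3_general tl hd tB hB S f hconn
end

section
/- Let D=(V,A) be an (S,f)-proper directed graph, and suppose there exists a D*-rooted connector B with |B| = opt_D := ∑_{v ∈ V} f(R_D(v)) − (|A| + f(S)). Assume that there exists a (D+B)-canonical set T' of arc-disjoint in-trees. Then T' uses every arc of A ∪ B, i.e., the union of the arc sets of the in-trees of T' equals A ∪ B. -/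
open Finset

attribute [local instance] Classical.propDecidable

universe u v

/-! Since the arcs of `B` are parallel to arcs of `A`, reachability in `D + B` is reachability
in `D`, so the in-tree of `T'` rooted at `s` has exactly `|{v | v reaches s in D}| - 1` arcs.
Summing over the `f s` trees of each root gives `∑_v f(R_D(v)) - f(S) = |A| + |B|` arcs in total,
by the choice of `|B|`. The trees being arc-disjoint, their union is then all of `A ∪ B`. -/

lemma ArcReach.sum_elim_iff_of_parallelTo {V A B : Type} {tl hd : A → V} {tB hB : B → V}
    (hpar : ParallelTo tl hd tB hB) {u w : V} :
    ArcReach (Sum.elim tl tB) (Sum.elim hd hB) Set.univ u w ↔ ArcReach tl hd Set.univ u w := by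
  refine ⟨Relation.ReflTransGen.mono ?_ u w, Relation.ReflTransGen.mono ?_ u w⟩
  · rintro a b ⟨(e | b'), -, rfl, rfl⟩
    · exact ⟨e, trivial, rfl, rfl⟩
    · obtain ⟨e, he₁, he₂⟩ := hpar b'
      exact ⟨e, trivial, he₁, he₂⟩
  · rintro a b ⟨e, -, rfl, rfl⟩
    exact ⟨Sum.inl e, trivial, rfl, rfl⟩

lemma fR_sum_elim_of_parallelTo {V A B : Type} {tl hd : A → V} {tB hB : B → V}
    (hpar : ParallelTo tl hd tB hB) (S : Finset V) (f : V → ℕ) :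
    fR (Sum.elim tl tB) (Sum.elim hd hB) S f = fR tl hd S f := by
  ext v
  simp only [fR, RD, ArcReach.sum_elim_iff_of_parallelTo hpar]

lemma sum_fR_eq_sum_mul_card_reach {V E : Type} [Fintype V] (tl hd : E → V) (S : Finset V)
    (f : V → ℕ) :
    ∑ v, fR tl hd S f v = ∑ s ∈ S, f s * #{v | ArcReach tl hd Set.univ v s} := by
  simp only [fR, RD, Finset.sum_filter]
  rw [Finset.sum_comm]
  refine Finset.sum_congr rfl fun s _ => ?_
  rw [← Finset.sum_filter, Finset.sum_const, smul_eq_mul, mul_comm]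

lemma sum_treeIdx {V M : Type} [AddCommMonoid M] (S : Finset V) (f : V → ℕ) (g : V → M) :
    ∑ i : TreeIdx S f, g i.1.1 = ∑ s ∈ S, f s • g s := by
  rw [← Finset.sum_coe_sort S]
  exact (Fintype.sum_sigma _).trans (by simp)

lemma IsInTree.card_add_one {V E : Type} [Fintype V] {tl hd : E → V} {root : V} {span : Set V}
    {T : Finset E} (h : IsInTree tl hd root span T) :
    #T + 1 = #{v | v ∈ span} := by
  -- The tail map is a bijection from `T` onto `span \ {root}`.
  have htails : #T = #{v | v ∈ span ∧ v ≠ root} := by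
    refine Finset.card_bij (fun e _ => tl e) (fun e he => ?_) (fun e₁ he₁ e₂ he₂ heq => ?_)
      (fun v hv => ?_)
    · simpa using ⟨h.mem_tail e he, h.root_no_out e he⟩
    · obtain ⟨e, -, huniq⟩ := h.out_unique (tl e₁) (h.mem_tail e₁ he₁) (h.root_no_out e₁ he₁)
      exact (huniq e₁ ⟨he₁, rfl⟩).trans (huniq e₂ ⟨he₂, heq.symm⟩).symm
    · simp only [Finset.mem_filter, Finset.mem_univ, true_and] at hv
      obtain ⟨e, ⟨he, rfl⟩, -⟩ := h.out_unique v hv.1 hv.2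
      exact ⟨e, he, rfl⟩
  have hspan : Finset.univ.filter (· ∈ span) =
      insert root (Finset.univ.filter fun v => v ∈ span ∧ v ≠ root) := by
    ext v
    by_cases hv : v = root <;> simp [hv, h.root_mem]
  rw [hspan, Finset.card_insert_of_notMem (by simp), htails]

lemma IsCanonical.sum_card_add_sum {V E : Type} [Fintype V] {tl hd : E → V} {S : Finset V}
    {f : V → ℕ} {T : TreeIdx S f → Finset E} (hcan : IsCanonical tl hd S f T) :
    ∑ i, #(T i) + ∑ s ∈ S, f s = ∑ v, fR tl hd S f v := by
  have hone : ∑ s ∈ S, f s = ∑ i : TreeIdx S f, 1 := by simp [sum_treeIdx S f (fun _ => 1)]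
  rw [hone, ← Finset.sum_add_distrib, sum_fR_eq_sum_mul_card_reach,
    Finset.sum_congr rfl fun i _ => (hcan i).card_add_one]
  exact sum_treeIdx S f fun s => #{v | ArcReach tl hd Set.univ v s}

lemma CoversAll.of_sum_card_eq {V E : Type} [Fintype E] {S : Finset V} {f : V → ℕ}
    {T : TreeIdx S f → Finset E} (hdisj : ArcDisjointFam T)
    (hcard : ∑ i, #(T i) = Fintype.card E) : CoversAll T := by
  have hunion : Finset.univ.biUnion T = Finset.univ := by
    refine Finset.eq_univ_of_card _ ?_
    rw [Finset.card_biUnion fun i _ j _ hij => hdisj i j hij, hcard]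
  intro e
  obtain ⟨i, -, hi⟩ := Finset.mem_biUnion.mp (hunion.symm ▸ Finset.mem_univ e)
  exact ⟨i, hi⟩

theorem stmt9_general {V A B : Type} [Fintype V] [Fintype A] [Fintype B]
    (tl hd : A → V) (tB hB : B → V) (S : Finset V) (f : V → ℕ)
    (hpar : ParallelTo tl hd tB hB)
    (hsize : (Nat.card B : ℤ) = (∑ v : V, (fR tl hd S f v : ℤ)) -
        ((Fintype.card A : ℤ) + ∑ s ∈ S, (f s : ℤ)))
    (T' : TreeIdx S f → Finset (A ⊕ B))
    (hcan : IsCanonical (Sum.elim tl tB) (Sum.elim hd hB) S f T')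
    (hdisj : ArcDisjointFam T') :
    ∀ e : A ⊕ B, ∃ i, e ∈ T' i := by
  have hcount := hcan.sum_card_add_sum
  rw [fR_sum_elim_of_parallelTo hpar] at hcount
  rw [Nat.card_eq_fintype_card] at hsize
  refine CoversAll.of_sum_card_eq hdisj ?_
  rw [Fintype.card_sum]
  zify at hcount ⊢
  linarith

/-- if `D` is `(S,f)`-proper, `B` is a `D*`-rooted connector of size
`opt_D`, and `T'` is a `(D+B)`-canonical set of arc-disjoint in-trees, then the union
of the arc sets of the in-trees of `T'` equals `A ∪ B`. -/
theorem stmt9 {V A B : Type} [Fintype V] [Fintype A] [Fintype B]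
    (tl hd : A → V) (tB hB : B → V) (S : Finset V) (f : V → ℕ)
    (hproper : IsProper tl hd S f)
    (hpar : ParallelTo tl hd tB hB)
    (hconn : IsRootedConnector tl hd S f tB hB)
    (hsize : (Nat.card B : ℤ) = (∑ v : V, (fR tl hd S f v : ℤ)) -
        ((Fintype.card A : ℤ) + ∑ s ∈ S, (f s : ℤ)))
    (T' : TreeIdx S f → Finset (A ⊕ B))
    (hcan : IsCanonical (Sum.elim tl tB) (Sum.elim hd hB) S f T')
    (hdisj : ArcDisjointFam T') :
    ∀ e : A ⊕ B, ∃ i, e ∈ T' i :=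
  stmt9_general tl hd tB hB S f hpar hsize T' hcan hdisj
end

section
/- Let D=(V,A) be an acyclic directed graph with S ⊆ V and f: S → ℤ≥0. Then there exists a D-canonical set of in-trees covering A if and only if for every vertex v ∈ V and every subset B ⊆ δ_D(v), |B| ≤ f(R_D(∂^+(B))), where ∂^+(B) is the set of heads of arcs in B and R_D(∂^+(B)) = ∪_{u ∈ ∂^+(B)} R_D(u). -/
open Finset

attribute [local instance] Classical.propDecidable

universe u v

/-- `D` has no directed cycle. -/
def Acyclic {V A : Type} (tl hd : A → V) : Prop :=
  ∀ u w : V, ArcStep tl hd Set.univ u w → ¬ ArcReach tl hd Set.univ w u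

/-!
Necessity: the arcs of `B` leave the same vertex `v`, and an in-tree has at most one arc out of
each vertex, so the trees containing them are pairwise different, and each is rooted in
`R_D(∂⁺(B))`.

Sufficiency: the condition is Hall's condition for assigning the arcs out of each vertex `v`
injectively to tree indices whose root is reachable from the head of the arc. Tree `i` then
takes, at every vertex reaching its root, the arc assigned to `i` if there is one, and otherwise
any out-arc whose head still reaches the root. Following these arcs strictly descends in the
acyclic digraph, so they form an in-tree, and every arc lies in the tree it is assigned to.
-/

theorem card_filter_root_treeIdx {V : Type} (S : Finset V) (f : V → ℕ) (P : V → Prop)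
    [DecidablePred P] :
    (univ.filter fun i : TreeIdx S f => P i.1.1).card = ∑ s ∈ S.filter P, f s := by
  rw [← Fintype.card_subtype]
  let e : {i : TreeIdx S f // P i.1.1} ≃ Σ s : {x : V // x ∈ S.filter P}, Fin (f s.1) :=
    { toFun := fun i => ⟨⟨i.1.1.1, mem_filter.2 ⟨i.1.1.2, i.2⟩⟩, i.1.2⟩
      invFun := fun p => ⟨⟨⟨p.1.1, (mem_filter.1 p.1.2).1⟩, p.2⟩, (mem_filter.1 p.1.2).2⟩ }
  rw [Fintype.card_congr e, Fintype.card_sigma, ← sum_coe_sort (S.filter P) f]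
  simp

theorem exists_fiberwise_injective {α β γ : Type*} {p : α → γ} {P : α → β → Prop}
    (h : ∀ c, ∃ G : {a // p a = c} → β, Function.Injective G ∧ ∀ x, P x.1 (G x)) :
    ∃ g : α → β, (∀ a a', p a = p a' → g a = g a' → a = a') ∧ ∀ a, P a (g a) := by
  choose G hG_inj hG using h
  have hg : ∀ a c (ha : p a = c), G (p a) ⟨a, rfl⟩ = G c ⟨a, ha⟩ := by
    rintro a c rfl; rfl
  refine ⟨fun a => G (p a) ⟨a, rfl⟩, fun a a' hp heq => ?_, fun a => hG _ ⟨a, rfl⟩⟩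
  dsimp only at heq
  rw [hg a' (p a) hp.symm] at heq
  exact congrArg Subtype.val (hG_inj _ heq)

section Digraph

variable {V A : Type} {tl hd : A → V}

theorem ArcReach.exists_out_arc_of_ne {v s : V} (h : ArcReach tl hd Set.univ v s) (hne : v ≠ s) :
    ∃ e, tl e = v ∧ ArcReach tl hd Set.univ (hd e) s := by
  rcases Relation.ReflTransGen.cases_head h with rfl | ⟨_, ⟨e, -, rfl, rfl⟩, h⟩
  · exact absurd rfl hne
  · exact ⟨e, rfl, h⟩

theorem Acyclic.wellFounded [Finite V] (hacyc : Acyclic tl hd) :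
    WellFounded (flip (ArcStep tl hd Set.univ)) := by
  have hirr : ∀ a, ¬ Relation.TransGen (flip (ArcStep tl hd Set.univ)) a a := fun a h => by
    obtain ⟨c, hca, hac⟩ := Relation.TransGen.head'_iff.1 h
    exact hacyc c a hca (Relation.reflTransGen_swap.1 hac)
  have : IsTrans V (Relation.TransGen (flip (ArcStep tl hd Set.univ))) :=
    ⟨fun _ _ _ => Relation.TransGen.trans⟩
  have : Std.Irrefl (Relation.TransGen (flip (ArcStep tl hd Set.univ))) := ⟨hirr⟩
  exact Subrelation.wf Relation.TransGen.single (Finite.wellFounded_of_trans_of_irrefl _)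

theorem IsInTree.eq_of_tl_eq {root : V} {span : Set V} {T : Finset A}
    (hT : IsInTree tl hd root span T) {e e' : A} (he : e ∈ T) (he' : e' ∈ T)
    (h : tl e = tl e') : e = e' := by
  obtain ⟨_, -, huniq⟩ := hT.out_unique (tl e) (hT.mem_tail e he) (hT.root_no_out e he)
  exact (huniq e ⟨he, rfl⟩).trans (huniq e' ⟨he', h.symm⟩).symm

theorem card_le_of_isCanonical_of_coversAll {S : Finset V} {f : V → ℕ}
    {T : TreeIdx S f → Finset A} (hcan : IsCanonical tl hd S f T) (hcov : CoversAll T)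
    {v : V} {B : Finset A} (hB : ∀ e ∈ B, tl e = v) :
    B.card ≤ ∑ s ∈ S.filter (fun s => ∃ e ∈ B, ArcReach tl hd Set.univ (hd e) s), f s := by
  choose idx hidx using hcov
  rw [← card_filter_root_treeIdx]
  refine card_le_card_of_injOn idx (fun e he => ?_) (fun e he e' he' heq => ?_)
  · exact mem_filter.2 ⟨mem_univ _, e, he, (hcan (idx e)).mem_head e (hidx e)⟩
  · exact (hcan (idx e)).eq_of_tl_eq (hidx e) (heq ▸ hidx e') ((hB e he).trans (hB e' he').symm)

theorem exists_treeIdx_assignment [Fintype A] {S : Finset V} {f : V → ℕ}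
    (hcond : ∀ (v : V) (B : Finset A), (∀ e ∈ B, tl e = v) →
      B.card ≤ ∑ s ∈ S.filter (fun s => ∃ e ∈ B, ArcReach tl hd Set.univ (hd e) s), f s) :
    ∃ g : A → TreeIdx S f, (∀ e e', tl e = tl e' → g e = g e' → e = e') ∧
      ∀ e, ArcReach tl hd Set.univ (hd e) (g e).1.1 := by
  refine exists_fiberwise_injective
    (P := fun e (i : TreeIdx S f) => ArcReach tl hd Set.univ (hd e) i.1.1) fun v => ?_
  let N : {e // tl e = v} → Finset (TreeIdx S f) := fun x =>
    univ.filter fun i => ArcReach tl hd Set.univ (hd x.1) i.1.1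
  suffices hall : ∀ B : Finset {e // tl e = v}, B.card ≤ (B.biUnion N).card by
    obtain ⟨G, hG_inj, hG⟩ := (all_card_le_biUnion_card_iff_exists_injective N).1 hall
    exact ⟨G, hG_inj, fun x => (mem_filter.1 (hG x)).2⟩
  intro B
  have hN : B.biUnion N =
      univ.filter fun i : TreeIdx S f => ∃ e ∈ B.map (Function.Embedding.subtype _),
        ArcReach tl hd Set.univ (hd e) i.1.1 := by
    ext i
    simp [N]
  rw [hN, ← card_map (Function.Embedding.subtype _)]
  refine (hcond v _ fun e he => ?_).trans_eq (card_filter_root_treeIdx S f _).symm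
  obtain ⟨x, -, rfl⟩ := mem_map.1 he
  exact x.2

variable (tl)

noncomputable def selectTree [Fintype A] (σ : V → Option A) : Finset A :=
  univ.filter fun e => σ (tl e) = some e

variable {tl}

theorem isInTree_selectTree [Finite V] [Fintype A] (hacyc : Acyclic tl hd) {r : V}
    {σ : V → Option A}
    (hsound : ∀ v e, σ v = some e → tl e = v ∧ ArcReach tl hd Set.univ (hd e) r)
    (htotal : ∀ v, ArcReach tl hd Set.univ v r → v ≠ r → ∃ e, σ v = some e) :
    IsInTree tl hd r {v | ArcReach tl hd Set.univ v r} (selectTree tl σ) := by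
  have mem : ∀ e, e ∈ selectTree tl σ ↔ σ (tl e) = some e := by simp [selectTree]
  have hhead : ∀ e ∈ selectTree tl σ, ArcReach tl hd Set.univ (hd e) r :=
    fun e he => (hsound _ e ((mem e).1 he)).2
  refine ⟨fun e he => .head ⟨e, trivial, rfl, rfl⟩ (hhead e he), hhead, .refl, ?_, ?_, ?_⟩
  · intro v hv hne
    obtain ⟨e, he⟩ := htotal v hv hne
    obtain rfl := (hsound v e he).1
    exact ⟨e, ⟨(mem e).2 he, rfl⟩, fun e' ⟨he', hte'⟩ =>
      Option.some.inj ((hte' ▸ (mem e').1 he').symm.trans he)⟩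
  · intro e he hroot
    exact hacyc _ _ ⟨e, trivial, rfl, rfl⟩ (hroot ▸ hhead e he)
  · intro v hv
    induction v using hacyc.wellFounded.induction with
    | _ v ih =>
      by_cases hvr : v = r
      · exact hvr ▸ .refl
      obtain ⟨e, he⟩ := htotal v hv hvr
      obtain ⟨rfl, hreach⟩ := hsound _ e he
      exact .head ⟨e, (mem e).2 he, rfl, rfl⟩ (ih _ ⟨e, trivial, rfl, rfl⟩ hreach)

variable (tl hd)

noncomputable def preferredArc {β : Type*} (g : A → β) (b : β) (r v : V) : Option A :=
  if h : ∃ e, tl e = v ∧ g e = b then some h.choose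
  else if h' : ∃ e, tl e = v ∧ ArcReach tl hd Set.univ (hd e) r then some h'.choose
  else none

variable {tl hd}

section preferredArc

variable {β : Type*} {g : A → β} {b : β} {r : V}

theorem preferredArc_sound (hg : ∀ e, g e = b → ArcReach tl hd Set.univ (hd e) r)
    {v : V} {e : A} (he : preferredArc tl hd g b r v = some e) :
    tl e = v ∧ ArcReach tl hd Set.univ (hd e) r := by
  unfold preferredArc at he
  split_ifs at he with h h'
  · obtain rfl := Option.some.inj he
    exact ⟨h.choose_spec.1, hg _ h.choose_spec.2⟩
  · obtain rfl := Option.some.inj he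
    exact h'.choose_spec

theorem preferredArc_total {v : V} (hv : ArcReach tl hd Set.univ v r) (hne : v ≠ r) :
    ∃ e, preferredArc tl hd g b r v = some e := by
  unfold preferredArc
  split_ifs with h h'
  · exact ⟨_, rfl⟩
  · exact ⟨_, rfl⟩
  · exact absurd (hv.exists_out_arc_of_ne hne) h'

theorem preferredArc_tl_of_eq (hinj : ∀ e e', tl e = tl e' → g e = g e' → e = e') {e : A} :
    preferredArc tl hd g (g e) r (tl e) = some e := by
  have h : ∃ e', tl e' = tl e ∧ g e' = g e := ⟨e, rfl, rfl⟩
  rw [preferredArc, dif_pos h]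
  exact congrArg some (hinj _ _ h.choose_spec.1 h.choose_spec.2)

end preferredArc

end Digraph

/-- for acyclic `D`, a `D`-canonical set of in-trees covering `A`
exists iff for every `v ∈ V` and every `B ⊆ δ_D(v)`, `|B| ≤ f(R_D(∂⁺(B)))`. -/
theorem stmt13 {V A : Type} [Fintype V] [Fintype A]
    (tl hd : A → V) (S : Finset V) (f : V → ℕ)
    (hacyc : Acyclic tl hd) :
    (∃ T : TreeIdx S f → Finset A, IsCanonical tl hd S f T ∧ CoversAll T) ↔
      (∀ (v : V) (B : Finset A), (∀ e ∈ B, tl e = v) →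
        B.card ≤ ∑ s ∈ S.filter
          (fun s => ∃ e ∈ B, ArcReach tl hd Set.univ (hd e) s), f s) := by
  refine ⟨fun ⟨T, hcan, hcov⟩ v B hB => card_le_of_isCanonical_of_coversAll hcan hcov hB,
    fun hcond => ?_⟩
  obtain ⟨g, hg_inj, hg_reach⟩ := exists_treeIdx_assignment hcond
  refine ⟨fun i => selectTree tl (preferredArc tl hd g i i.1.1), fun i => ?_,
    fun e => ⟨g e, ?_⟩⟩
  · exact isInTree_selectTree hacyc (fun _ _ => preferredArc_sound fun e he => he ▸ hg_reach e)
      fun _ => preferredArc_total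
  · simpa [selectTree] using preferredArc_tl_of_eq hg_inj
end

section
/- Let D=(V,A) be an acyclic directed graph with a topological labeling of V by integers 1..|V| such that every arc's head has smaller label than its tail, and let V_t be the set of vertices with label ≤ t. If for every vertex v, the bipartite graph G_v (as in the matching characterization) has a matching saturating X_v, then for every t, the induced subgraph D[V_t] (with specified vertices S ∩ V_t and f restricted) admits a D[V_t]-canonical set of in-trees covering the arc set of D[V_t]. -/
open Finset

attribute [local instance] Classical.propDecidable

universe u v

/-- The bipartite graph `G_v` has a matching saturating
`X_v = {x_e : e ∈ δ_D(v)}`: an injection from the arcs with tail `v` to the pairs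
`(s, j)` with `s ∈ S` reachable from `v` and `j < f s`, sending each arc `e` to a
pair whose root `s` is reachable from the head of `e`. -/
def HasSaturatingMatching {V A : Type} (tl hd : A → V) (S : Finset V) (f : V → ℕ)
    (v : V) : Prop :=
  ∃ m : {e : A // tl e = v} →
      Σ s : {x : V // x ∈ S ∧ ArcReach tl hd Set.univ v x}, Fin (f s.1),
    Function.Injective m ∧
    ∀ e : {e : A // tl e = v}, ArcReach tl hd Set.univ (hd e.1) (m e).1.1

/-!
Every vertex `v` other than the root `s` of the `j`-th tree for `s` picks one outgoing arc
towards `s`: the arc matched to `(s, j)` in `G_v` if there is one, and otherwise any arc whose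
head still reaches `s`. Since labels strictly decrease along arcs, following the picked arcs
from any vertex that reaches `s` ends at `s`, so the picked arcs form an in-tree; since the
matching saturates `X_v`, every arc is picked by the tree it is matched to. The hypothesis
passes to `D[V_t]`, because `V_t` is closed under reachability, so it suffices to treat `D`.
-/

variable {V A : Type} {tl hd : A → V}

lemma ArcReach.lab_le {lab : V → ℕ} (htopo : ∀ e : A, lab (hd e) < lab (tl e)) {v w : V}
    (h : ArcReach tl hd Set.univ v w) : lab w ≤ lab v := by
  induction h with
  | refl => exact le_rfl
  | tail _ step ih =>
    obtain ⟨e, -, rfl, rfl⟩ := step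
    exact (htopo e).le.trans ih

lemma ArcReach.head_arc {P : Set A} {e : A} {w : V} (he : e ∈ P)
    (h : ArcReach tl hd P (hd e) w) : ArcReach tl hd P (tl e) w :=
  Relation.ReflTransGen.head ⟨e, he, rfl, rfl⟩ h

section Induced

variable (p : V → Prop) (tl hd)

def inducedTl (e : {e : A // p (tl e) ∧ p (hd e)}) : {v : V // p v} := ⟨tl e.1, e.2.1⟩

def inducedHd (e : {e : A // p (tl e) ∧ p (hd e)}) : {v : V // p v} := ⟨hd e.1, e.2.2⟩

variable {p tl hd}

lemma ArcReach.closed (hclosed : ∀ e : A, p (tl e) → p (hd e)) {v w : V}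
    (h : ArcReach tl hd Set.univ v w) (hv : p v) : p w := by
  induction h with
  | refl => exact hv
  | tail _ step ih =>
    obtain ⟨e, -, rfl, rfl⟩ := step
    exact hclosed e ih

lemma ArcReach.induce (hclosed : ∀ e : A, p (tl e) → p (hd e)) {v : V} {w : {v : V // p v}}
    (h : ArcReach tl hd Set.univ v w.1) (hv : p v) :
    ArcReach (inducedTl tl hd p) (inducedHd tl hd p) Set.univ ⟨v, hv⟩ w := by
  induction h using Relation.ReflTransGen.head_induction_on with
  | refl => exact Relation.ReflTransGen.refl
  | head step _ ih =>
    obtain ⟨e, -, rfl, rfl⟩ := step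
    let e' : {e : A // p (tl e) ∧ p (hd e)} := ⟨e, hv, hclosed e hv⟩
    exact ArcReach.head_arc (e := e') (Set.mem_univ _) (ih _)

lemma HasSaturatingMatching.induce [DecidablePred p] (hclosed : ∀ e : A, p (tl e) → p (hd e))
    {S : Finset V} {f : V → ℕ} {v : {v : V // p v}} (h : HasSaturatingMatching tl hd S f v.1) :
    HasSaturatingMatching (inducedTl tl hd p) (inducedHd tl hd p) (S.subtype p)
      (fun v => f v.1) v := by
  obtain ⟨m, hminj, hm⟩ := h
  let root (s : {x : V // x ∈ S ∧ ArcReach tl hd Set.univ v.1 x}) :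
      {x : {v : V // p v} // x ∈ S.subtype p ∧
        ArcReach (inducedTl tl hd p) (inducedHd tl hd p) Set.univ v x} :=
    ⟨⟨s.1, s.2.2.closed hclosed v.2⟩, Finset.mem_subtype.2 s.2.1,
      ArcReach.induce hclosed s.2.2 v.2⟩
  let arc (e : {e // inducedTl tl hd p e = v}) : {e : A // tl e = v.1} :=
    ⟨e.1.1, congrArg Subtype.val e.2⟩
  refine ⟨Sigma.map root (fun _ j => j) ∘ m ∘ arc, ?_, fun e => ?_⟩
  · refine (Function.Injective.sigma_map (f₁ := root) (f₂ := fun _ j => j) ?_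
      fun _ => Function.injective_id).comp (hminj.comp fun e₁ e₂ h => ?_)
    · intro s₁ s₂ h
      exact Subtype.ext (congrArg (fun x => x.1.1) h)
    · exact Subtype.ext (Subtype.ext (congrArg Subtype.val h :))
  · exact ArcReach.induce hclosed (hm (arc e)) e.1.2.2

end Induced

section Canonical

variable (S : Finset V) (f : V → ℕ)

lemma HasSaturatingMatching.exists_injective_treeIdx {v : V}
    (h : HasSaturatingMatching tl hd S f v) :
    ∃ g : {e : A // tl e = v} → TreeIdx S f, Function.Injective g ∧
      ∀ e, ArcReach tl hd Set.univ (hd e.1) (g e).1.1 := by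
  obtain ⟨m, hminj, hm⟩ := h
  let forget (s : {x : V // x ∈ S ∧ ArcReach tl hd Set.univ v x}) : {x : V // x ∈ S} :=
    ⟨s.1, s.2.1⟩
  refine ⟨Sigma.map forget (fun _ j => j) ∘ m, ?_, hm⟩
  refine (Function.Injective.sigma_map (f₁ := forget) (f₂ := fun _ j => j) ?_
    fun _ => Function.injective_id).comp hminj
  intro s₁ s₂ h
  exact Subtype.ext (congrArg Subtype.val h :)

variable (tl hd) {S f}

noncomputable def treeArc (g : ∀ v, {e : A // tl e = v} → TreeIdx S f) (i : TreeIdx S f)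
    (v : V) : Option A :=
  if v = i.1.1 then none
  else if h : ∃ e, g v e = i then some h.choose.1
  else if h : ∃ e, tl e = v ∧ ArcReach tl hd Set.univ (hd e) i.1.1 then some h.choose
  else none

variable {tl hd} {g : ∀ v, {e : A // tl e = v} → TreeIdx S f} {i : TreeIdx S f} {v : V}

lemma treeArc_spec (hg : ∀ v e, ArcReach tl hd Set.univ (hd e.1) (g v e).1.1) {e : A}
    (h : treeArc tl hd g i v = some e) :
    tl e = v ∧ v ≠ i.1.1 ∧ ArcReach tl hd Set.univ (hd e) i.1.1 := by
  unfold treeArc at h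
  split_ifs at h with hr hm hn <;> cases h
  · have hroot := hg v hm.choose
    rw [hm.choose_spec] at hroot
    exact ⟨hm.choose.2, hr, hroot⟩
  · exact ⟨hn.choose_spec.1, hr, hn.choose_spec.2⟩

lemma treeArc_isSome (hv : v ≠ i.1.1) (hreach : ArcReach tl hd Set.univ v i.1.1) :
    (treeArc tl hd g i v).isSome := by
  unfold treeArc
  rw [if_neg hv]
  split_ifs with _ hn
  · rfl
  · rfl
  · rcases Relation.ReflTransGen.cases_head hreach with rfl | ⟨c, ⟨e, -, hte, rfl⟩, hc⟩
    · exact absurd rfl hv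
    · exact absurd ⟨e, hte, hc⟩ hn

lemma treeArc_eq_of_eq (hinj : Function.Injective (g v)) (hv : v ≠ i.1.1)
    {e : {e : A // tl e = v}} (he : g v e = i) : treeArc tl hd g i v = some e.1 := by
  have hm : ∃ e, g v e = i := ⟨e, he⟩
  unfold treeArc
  rw [if_neg hv, dif_pos hm, hinj (hm.choose_spec.trans he.symm)]

end Canonical

lemma isInTree_filter_next [Fintype A] {lab : V → ℕ}
    (htopo : ∀ e : A, lab (hd e) < lab (tl e)) {r : V} (next : V → Option A)
    (hsome : ∀ v, v ≠ r → ArcReach tl hd Set.univ v r → (next v).isSome)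
    (hspec : ∀ v e, next v = some e →
      tl e = v ∧ v ≠ r ∧ ArcReach tl hd Set.univ (hd e) r) :
    IsInTree tl hd r {v | ArcReach tl hd Set.univ v r}
      (univ.filter fun e => next (tl e) = some e) := by
  have hmem {e : A} :
      e ∈ univ.filter (fun e => next (tl e) = some e) ↔ next (tl e) = some e := by
    simp
  have hnext {v : V} (hv : v ≠ r) (hreach : ArcReach tl hd Set.univ v r) :
      ∃ e, next v = some e ∧ tl e = v := by
    obtain ⟨e, he⟩ := Option.isSome_iff_exists.1 (hsome v hv hreach)
    exact ⟨e, he, (hspec v e he).1⟩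
  refine ⟨fun e he => ?_, fun e he => (hspec _ e (hmem.1 he)).2.2, .refl,
    fun v hreach hv => ?_, fun e he => (hspec _ e (hmem.1 he)).2.1, fun v hreach => ?_⟩
  · exact ArcReach.head_arc (Set.mem_univ e) (hspec _ e (hmem.1 he)).2.2
  · obtain ⟨e, he, rfl⟩ := hnext hv hreach
    refine ⟨e, ⟨hmem.2 he, rfl⟩, fun e' ⟨he', hte'⟩ => ?_⟩
    rw [hmem, hte', he] at he'
    exact (Option.some.inj he').symm
  · induction hlab : lab v using Nat.strong_induction_on generalizing v with
    | _ n ih =>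
      by_cases hv : v = r
      · exact hv ▸ .refl
      obtain ⟨e, he, rfl⟩ := hnext hv hreach
      have hhd := (hspec _ e he).2.2
      exact ArcReach.head_arc (mem_coe.2 (hmem.2 he)) (ih _ (hlab ▸ htopo e) _ hhd rfl)

theorem exists_isCanonical_coversAll [Fintype A] (S : Finset V) (f : V → ℕ) {lab : V → ℕ}
    (htopo : ∀ e : A, lab (hd e) < lab (tl e))
    (hmatch : ∀ v : V, HasSaturatingMatching tl hd S f v) :
    ∃ T : TreeIdx S f → Finset A, IsCanonical tl hd S f T ∧ CoversAll T := by
  choose g hginj hg using fun v => (hmatch v).exists_injective_treeIdx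
  refine ⟨fun i => univ.filter fun e => treeArc tl hd g i (tl e) = some e, fun i => ?_,
    fun e => ?_⟩
  · exact isInTree_filter_next htopo _ (fun _ hv hreach => treeArc_isSome hv hreach)
      (fun _ _ h => treeArc_spec hg h)
  · refine ⟨g (tl e) ⟨e, rfl⟩,
      mem_filter.2 ⟨mem_univ e, treeArc_eq_of_eq (hginj _) ?_ rfl⟩⟩
    exact fun h => (htopo e).not_ge (h ▸ (hg _ ⟨e, rfl⟩).lab_le htopo)

theorem stmt16_general {V A : Type} [Fintype A]
    (tl hd : A → V) (S : Finset V) (f : V → ℕ)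
    (lab : V → ℕ)
    (htopo : ∀ e : A, lab (hd e) < lab (tl e))
    (hmatch : ∀ v : V, HasSaturatingMatching tl hd S f v) :
    ∀ t : ℕ,
      ∃ T : TreeIdx (S.subtype fun v => lab v ≤ t) (fun v => f v.1) →
          Finset {e : A // lab (tl e) ≤ t ∧ lab (hd e) ≤ t},
        IsCanonical
          (fun e => (⟨tl e.1, e.2.1⟩ : {v : V // lab v ≤ t}))
          (fun e => (⟨hd e.1, e.2.2⟩ : {v : V // lab v ≤ t}))
          (S.subtype fun v => lab v ≤ t) (fun v => f v.1) T ∧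
        CoversAll T := by
  intro t
  have hclosed (e : A) (he : lab (tl e) ≤ t) : lab (hd e) ≤ t := (htopo e).le.trans he
  exact exists_isCanonical_coversAll (tl := inducedTl tl hd _) (hd := inducedHd tl hd _) _ _
    (lab := fun v => lab v.1) (fun e => htopo e.1) fun v => (hmatch v.1).induce hclosed

/-- `D` acyclic with a topological labeling `ℓ : V → {1,…,|V|}`
(head labels smaller than tail labels). If every `G_v` has a matching saturating
`X_v`, then for every `t`, the induced subgraph `D[V_t]` on the vertices of label
`≤ t` (with specified vertices `S ∩ V_t` and `f` restricted) admits a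
`D[V_t]`-canonical set of in-trees covering its arc set. -/
theorem stmt16 {V A : Type} [Fintype V] [Fintype A]
    (tl hd : A → V) (S : Finset V) (f : V → ℕ)
    (lab : V → ℕ) (hinj : Function.Injective lab)
    (hrange : ∀ v : V, 1 ≤ lab v ∧ lab v ≤ Fintype.card V)
    (htopo : ∀ e : A, lab (hd e) < lab (tl e))
    (hmatch : ∀ v : V, HasSaturatingMatching tl hd S f v) :
    ∀ t : ℕ,
      ∃ T : TreeIdx (S.subtype fun v => lab v ≤ t) (fun v => f v.1) →
          Finset {e : A // lab (tl e) ≤ t ∧ lab (hd e) ≤ t},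
        IsCanonical
          (fun e => (⟨tl e.1, e.2.1⟩ : {v : V // lab v ≤ t}))
          (fun e => (⟨hd e.1, e.2.2⟩ : {v : V // lab v ≤ t}))
          (S.subtype fun v => lab v ≤ t) (fun v => f v.1) T ∧
        CoversAll T :=
  stmt16_general tl hd S f lab htopo hmatch
end

section
/- Let D=(V,A) be a directed graph with S ⊆ V and f: S → ℤ≥0 where f(s_i) ≥ 1 for some s_i, and suppose D is not (S,f)-proper (i.e., |δ_{D*}(v)| > f(R_D(v)) for some v ∈ V). Then there is no D-canonical set of in-trees covering A. -/
open Finset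

attribute [local instance] Classical.propDecidable

universe u v

/-! Each in-tree of the family contains at most one arc leaving `v`, and none if it is rooted
at `v`; and only the trees rooted in `R_D(v)` can contain `v` at all. Sending an arc of `D`
with tail `v` to a tree that covers it, and each of the `f v` apex arcs at `v` to the tree
with the same index, is therefore injective into the `f(R_D(v))` trees rooted in `R_D(v)`,
so `|δ_{D*}(v)| ≤ f(R_D(v))`. -/

section InTree

variable {V E : Type} {tl hd : E → V} {root : V} {span : Set V} {T : Finset E}

theorem IsInTree.eq_of_tail_eq (hT : IsInTree tl hd root span T) {e₁ e₂ : E}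
    (h₁ : e₁ ∈ T) (h₂ : e₂ ∈ T) (h : tl e₁ = tl e₂) : e₁ = e₂ := by
  obtain ⟨e, -, he⟩ := hT.out_unique (tl e₁) (hT.mem_tail e₁ h₁) (hT.root_no_out e₁ h₁)
  exact (he e₁ ⟨h₁, rfl⟩).trans (he e₂ ⟨h₂, h.symm⟩).symm

end InTree

section Canonical

variable {V E : Type} {tl hd : E → V} {S : Finset V} {f : V → ℕ}

theorem IsCanonical.root_mem_RD {T : TreeIdx S f → Finset E} (hT : IsCanonical tl hd S f T)
    {i : TreeIdx S f} {e : E} (he : e ∈ T i) : i.1.1 ∈ RD tl hd S (tl e) :=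
  mem_filter.mpr ⟨i.1.2, (hT i).mem_tail e he⟩

theorem natCard_treeIdx_root_mem {R : Finset V} (hR : R ⊆ S) :
    Nat.card {i : TreeIdx S f // i.1.1 ∈ R} = ∑ s ∈ R, f s := by
  let equivSigma : {i : TreeIdx S f // i.1.1 ∈ R} ≃ Σ s : R, Fin (f s) :=
    { toFun := fun i => ⟨⟨i.1.1.1, i.2⟩, i.1.2⟩
      invFun := fun p => ⟨⟨⟨p.1.1, hR p.1.2⟩, p.2⟩, p.1.2⟩
      left_inv := fun _ => rfl
      right_inv := fun _ => rfl }
  rw [Nat.card_congr equivSigma, Nat.card_eq_fintype_card, Fintype.card_sigma]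
  simp only [Fintype.card_fin]
  exact sum_coe_sort R f

theorem natCard_starOut_le_fR {T : TreeIdx S f → Finset E} (hT : IsCanonical tl hd S f T)
    {tree : E → TreeIdx S f} (htree : ∀ e, e ∈ T (tree e)) (v : V) :
    Nat.card {x : E ⊕ TreeIdx S f // starTail tl S f x = some v} ≤ fR tl hd S f v := by
  let g : E ⊕ TreeIdx S f → TreeIdx S f := Sum.elim tree id
  have hmaps : ∀ x, starTail tl S f x = some v → (g x).1.1 ∈ RD tl hd S v := by
    rintro (e | i) hx <;>
      simp only [starTail, Sum.elim_inl, Sum.elim_inr, Option.some.injEq] at hx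
    · exact hx ▸ hT.root_mem_RD (htree e)
    · exact mem_filter.mpr ⟨i.1.2, hx ▸ Relation.ReflTransGen.refl⟩
  have hinj : ∀ x y, starTail tl S f x = some v → starTail tl S f y = some v →
      g x = g y → x = y := by
    rintro (e₁ | i₁) (e₂ | i₂) hx hy hg <;>
      simp only [g, starTail, Sum.elim_inl, Sum.elim_inr, id, Option.some.injEq] at hx hy hg
    · exact congrArg Sum.inl <|
        (hT _).eq_of_tail_eq (htree e₁) (hg ▸ htree e₂) (hx.trans hy.symm)
    · exact absurd (hx.trans (hg ▸ hy).symm) ((hT _).root_no_out e₁ (htree e₁))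
    · exact absurd (hy.trans (hg ▸ hx).symm) ((hT _).root_no_out e₂ (htree e₂))
    · exact congrArg Sum.inr hg
  rw [fR, ← natCard_treeIdx_root_mem (R := RD tl hd S v) (filter_subset _ S)]
  exact Nat.card_le_card_of_injective (fun x => ⟨g x.1, hmaps x.1 x.2⟩)
    fun x y h => Subtype.ext (hinj x.1 y.1 x.2 y.2 (congrArg Subtype.val h))

end Canonical

theorem stmt19_general {V A : Type}
    (tl hd : A → V) (S : Finset V) (f : V → ℕ)
    (hnot : ∃ v : V,
      fR tl hd S f v <
        Nat.card {e : A ⊕ TreeIdx S f // starTail tl S f e = some v}) :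
    ¬ ∃ T : TreeIdx S f → Finset A, IsCanonical tl hd S f T ∧ CoversAll T := by
  rintro ⟨T, hcan, hcov⟩
  obtain ⟨v, hv⟩ := hnot
  choose tree htree using hcov
  exact (natCard_starOut_le_fR hcan htree v).not_gt hv

/-- if some `s ∈ S` has `f s ≥ 1` and `D` is not `(S,f)`-proper
(i.e. `|δ_{D*}(v)| > f(R_D(v))` for some `v`), then there is no `D`-canonical set of
in-trees covering `A`. -/
theorem stmt19 {V A : Type} [Fintype V] [Fintype A]
    (tl hd : A → V) (S : Finset V) (f : V → ℕ)
    (hf : ∃ s ∈ S, 1 ≤ f s)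
    (hnot : ∃ v : V,
      fR tl hd S f v <
        Nat.card {e : A ⊕ TreeIdx S f // starTail tl S f e = some v}) :
    ¬ ∃ T : TreeIdx S f → Finset A, IsCanonical tl hd S f T ∧ CoversAll T :=
  stmt19_general tl hd S f hnot
end
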